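/- arXiv:2401.13208 — 3 statements merged into one kernel-verified Lean document; each statement's English description precedes it below -/
import Mathlib

section
/- For an arbitrary finite sequence of events A_1,...,A_p on a probability space, there exists an exchangeable sequence of events B_1,...,B_p (on a possibly different probability space) such that the number of occurrences ∑_{j=1}^p 1(A_j) and ∑_{j=1}^p 1(B_j) have the same distribution. -/
/-!
Let `occurring A ω` be the set of indices `j` with `ω ∈ A j`. Averaging its law over all
permutations of the indices gives a permutation-invariant law on subsets, and since cardinality
is permutation invariant, the cardinality has the same law under both. Under an invariant
law, the probability that the random subset contains a given `s` depends only on `#s`, because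
any two subsets of equal size are carried onto each other by a permutation. So the events
`B j = {u | j ∈ u}` on the space of subsets are exchangeable and count as many as the `A j`.
-/

open MeasureTheory
open scoped Pointwise ENNReal

namespace MeasureTheory.Measure

variable (G : Type*) {X Y : Type*} [Group G] [Fintype G] [MulAction G X] [MeasurableSpace X]

noncomputable def symmetrize (μ : Measure X) : Measure X :=
  (Fintype.card G : ℝ≥0∞)⁻¹ • ∑ g : G, μ.map (g • ·)

variable {G} [MeasurableConstSMul G X] [MeasurableSpace Y]

theorem symmetrize_apply (μ : Measure X) {s : Set X} (hs : MeasurableSet s) :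
    symmetrize G μ s = (Fintype.card G : ℝ≥0∞)⁻¹ * ∑ g : G, μ ((g • ·) ⁻¹' s) := by
  simp only [symmetrize, smul_apply, finsetSum_apply, smul_eq_mul,
    map_apply (measurable_const_smul _) hs]

theorem symmetrize_apply_of_smul_preimage_eq (μ : Measure X) {s : Set X} (hs : MeasurableSet s)
    (hsG : ∀ g : G, (g • ·) ⁻¹' s = s) : symmetrize G μ s = μ s := by
  rw [symmetrize_apply μ hs]
  simp only [hsG, Finset.sum_const, Finset.card_univ, nsmul_eq_mul, ← mul_assoc]
  rw [ENNReal.inv_mul_cancel (by simp) (ENNReal.natCast_ne_top _), one_mul]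

instance isProbabilityMeasure_symmetrize (μ : Measure X) [IsProbabilityMeasure μ] :
    IsProbabilityMeasure (symmetrize G μ) :=
  ⟨by rw [symmetrize_apply_of_smul_preimage_eq μ .univ fun _ => rfl, measure_univ]⟩

theorem map_symmetrize_of_comp_smul_eq (μ : Measure X) {f : X → Y} (hf : Measurable f)
    (hfG : ∀ (g : G) x, f (g • x) = f x) : (symmetrize G μ).map f = μ.map f := by
  ext s hs
  rw [map_apply hf hs, map_apply hf hs]
  exact symmetrize_apply_of_smul_preimage_eq μ (hf hs) fun g => by ext x; simp [hfG]

theorem map_smul_symmetrize (μ : Measure X) (h : G) :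
    (symmetrize G μ).map (h • ·) = symmetrize G μ := by
  ext s hs
  have hpre : ∀ g : G, (g • ·) ⁻¹' ((h • ·) ⁻¹' s) = ((h * g) • ·) ⁻¹' s := fun g => by
    ext x; simp [mul_smul]
  rw [map_apply (measurable_const_smul h) hs, symmetrize_apply μ (measurable_const_smul h hs),
    symmetrize_apply μ hs]
  simp only [hpre]
  exact congrArg _ (Equiv.sum_comp (Equiv.mulLeft h) fun g => μ ((g • ·) ⁻¹' s))

end MeasureTheory.Measure

namespace Finset

variable {α : Type*}

theorem biInter_setOf_mem (s : Finset α) : ⋂ i ∈ s, {u : Finset α | i ∈ u} = {u | s ⊆ u} := by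
  ext u; simp [Finset.subset_iff]

variable [DecidableEq α]

theorem exists_perm_smul_eq_of_card_eq {s t : Finset α} (hst : s.card = t.card) :
    ∃ σ : Equiv.Perm α, σ • t = s := by
  have := Set.powersetCard.isPretransitive (α := α) (n := s.card)
  obtain ⟨σ, hσ⟩ := MulAction.exists_smul_eq (Equiv.Perm α)
    (⟨t, hst.symm⟩ : Set.powersetCard α s.card) ⟨s, rfl⟩
  exact ⟨σ, congrArg Subtype.val hσ⟩

instance measurableConstSMul_perm : MeasurableConstSMul (Equiv.Perm α) (Finset α) :=
  ⟨fun σ => measurable_finset_iff.2 fun a => by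
    simpa only [inv_smul_mem_iff] using measurable_finset_mem (σ⁻¹ • a)⟩

theorem measure_setOf_superset_eq_of_card_eq {μ : Measure (Finset α)}
    (hμ : ∀ σ : Equiv.Perm α, μ.map (σ • ·) = μ) {s t : Finset α} (hst : s.card = t.card) :
    μ {u | s ⊆ u} = μ {u | t ⊆ u} := by
  obtain ⟨σ, rfl⟩ := exists_perm_smul_eq_of_card_eq hst
  have hmeas : MeasurableSet {u : Finset α | σ • t ⊆ u} := by
    rw [← biInter_setOf_mem]
    exact .biInter (Finset.countable_toSet _) fun i _ => measurableSet_mem_finset i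
  calc μ {u | σ • t ⊆ u} = μ.map (σ • ·) {u | σ • t ⊆ u} := by rw [hμ]
    _ = μ {u | t ⊆ u} := by
      rw [Measure.map_apply (measurable_const_smul σ) hmeas]
      simp only [Set.preimage_ofPred_eq, smul_finset_subset_smul_finset_iff]

end Finset

section Occurrences

variable {ι Ω : Type*} [Fintype ι]

open Classical in
noncomputable def occurring (A : ι → Set Ω) (ω : Ω) : Finset ι :=
  Finset.univ.filter (ω ∈ A ·)

@[simp]
theorem mem_occurring {A : ι → Set Ω} {ω : Ω} {j : ι} : j ∈ occurring A ω ↔ ω ∈ A j := by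
  simp [occurring]

theorem occurring_setOf_mem (u : Finset ι) :
    occurring (fun j => {v : Finset ι | j ∈ v}) u = u := by
  ext; simp

theorem card_occurring (A : ι → Set Ω) (ω : Ω) :
    (occurring A ω).card = ∑ j, (A j).indicator (fun _ => (1 : ℕ)) ω := by
  rw [occurring, Finset.card_filter]
  rfl

theorem measurable_occurring [MeasurableSpace Ω] {A : ι → Set Ω}
    (hA : ∀ j, MeasurableSet (A j)) : Measurable (occurring A) :=
  measurable_finset_iff.2 fun j => by simpa only [mem_occurring] using (hA j).mem

end Occurrences

/-- Galambos (1973): for arbitrary events A_1,...,A_p there exist exchangeable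
events B_1,...,B_p (on a possibly different probability space) such that the
numbers of occurrences have the same distribution. -/
theorem exists_exchangeable_events_same_count {Ω : Type*} [MeasurableSpace Ω]
    (P : Measure Ω) [IsProbabilityMeasure P] {p : ℕ}
    (A : Fin p → Set Ω) (hA : ∀ j, MeasurableSet (A j)) :
    ∃ (Ω' : Type) (_ : MeasurableSpace Ω') (P' : Measure Ω')
      (_ : IsProbabilityMeasure P') (B : Fin p → Set Ω'),
      (∀ j, MeasurableSet (B j)) ∧
      (∀ s t : Finset (Fin p), s.card = t.card →
        P' (⋂ i ∈ s, B i) = P' (⋂ i ∈ t, B i)) ∧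
      Measure.map (fun ω => ∑ j : Fin p, Set.indicator (A j) (fun _ => (1 : ℕ)) ω) P
        = Measure.map (fun ω => ∑ j : Fin p, Set.indicator (B j) (fun _ => (1 : ℕ)) ω) P' := by
  have hF := measurable_occurring hA
  have := Measure.isProbabilityMeasure_map (μ := P) hF.aemeasurable
  let μ := Measure.symmetrize (Equiv.Perm (Fin p)) (P.map (occurring A))
  refine ⟨Finset (Fin p), inferInstance, μ, Measure.isProbabilityMeasure_symmetrize _,
    fun j => {u | j ∈ u}, measurableSet_mem_finset, fun s t hst => ?_, ?_⟩
  · simp only [Finset.biInter_setOf_mem]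
    exact Finset.measure_setOf_superset_eq_of_card_eq (Measure.map_smul_symmetrize _) hst
  · have hcard : Measurable (Finset.card : Finset (Fin p) → ℕ) := .of_discrete
    simp only [← card_occurring, occurring_setOf_mem]
    calc P.map (fun ω => (occurring A ω).card) = (P.map (occurring A)).map Finset.card :=
          (Measure.map_map hcard hF).symm
      _ = μ.map Finset.card :=
          (Measure.map_symmetrize_of_comp_smul_eq _ hcard Finset.card_smul_finset).symm
end

section
/- Under the Benjamini–Hochberg procedure applied to m independent p-values of which m_0 correspond to true nulls with uniform p-values, the false discovery rate E[V/max(R,1)] equals (m_0/m)·α_0, and in particular is at most α_0. -/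
/-!
Write `V / max R 1` as the sum over true nulls `k` of `1{k rejected} / R`, and let `Rₖ` be the BH
count after `pₖ` is set to `0`. Lowering a p-value that is already below `r·α0/m` leaves the
counts at all steps `≥ r` unchanged, so it does not change whether BH stops at step `r`. Hence `k`
is rejected iff `pₖ ≤ Rₖ·α0/m`, and then `R = Rₖ`; the `k`-th term is `1{pₖ ≤ Rₖ·α0/m} / Rₖ`.
Since `Rₖ ∈ [1, m]` depends only on the other p-values, it is independent of `pₖ`, and splitting
on `Rₖ = r` the term has expectation `∑ᵣ (r·α0/m) P(Rₖ = r) / r = α0/m`.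
-/

open MeasureTheory

open Classical in
/-- The number of rejections of the Benjamini–Hochberg procedure at level `α0`:
the largest `i ≤ m` such that at least `i` of the p-values are `≤ i·α0/m`. -/
noncomputable def bhCount (α0 : ℝ) {m : ℕ} (pv : Fin m → ℝ) : ℕ :=
  Nat.findGreatest
    (fun i => i ≤ (Finset.univ.filter (fun k => pv k ≤ (i : ℝ) * α0 / m)).card) m

open Classical in
/-- The rejection set of the Benjamini–Hochberg procedure at level `α0`. -/
noncomputable def bhReject (α0 : ℝ) {m : ℕ} (pv : Fin m → ℝ) : Finset (Fin m) :=
  Finset.univ.filter (fun k => pv k ≤ (bhCount α0 pv : ℝ) * α0 / m)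

open ProbabilityTheory Finset Function

theorem Nat.findGreatest_eq_iff_of_forall_le_iff {P Q : ℕ → Prop} [DecidablePred P]
    [DecidablePred Q] {n r : ℕ} (h : ∀ i, r ≤ i → (P i ↔ Q i)) :
    Nat.findGreatest P n = r ↔ Nat.findGreatest Q n = r := by
  simp only [Nat.findGreatest_eq_iff, h r le_rfl]
  refine and_congr_right fun _ => and_congr_right fun _ => ?_
  exact forall_congr' fun i => imp_congr_right fun hi => by rw [h i hi.le]

noncomputable def numBelow (α0 : ℝ) {m : ℕ} (pv : Fin m → ℝ) (i : ℕ) : ℕ :=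
  #{k | pv k ≤ (i : ℝ) * α0 / m}

section Combinatorics

variable {α0 : ℝ} {m : ℕ} {pv : Fin m → ℝ}

theorem bhCount_eq_findGreatest (α0 : ℝ) (pv : Fin m → ℝ) :
    bhCount α0 pv = Nat.findGreatest (fun i => i ≤ numBelow α0 pv i) m := rfl

theorem numBelow_mono (hα : 0 ≤ α0) : Monotone (numBelow α0 pv) := fun i j hij =>
  card_le_card fun k hk => by
    simp only [mem_filter, mem_univ, true_and] at hk ⊢
    exact hk.trans (by gcongr)

theorem numBelow_le (i : ℕ) : numBelow α0 pv i ≤ m :=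
  (card_filter_le _ _).trans_eq (card_fin m)

theorem numBelow_bhCount (hα : 0 ≤ α0) : numBelow α0 pv (bhCount α0 pv) = bhCount α0 pv := by
  have hle : bhCount α0 pv ≤ numBelow α0 pv (bhCount α0 pv) :=
    Nat.findGreatest_spec (P := fun i => i ≤ numBelow α0 pv i) (Nat.zero_le m) (Nat.zero_le _)
  exact le_antisymm (Nat.le_findGreatest (numBelow_le _) (numBelow_mono hα hle)) hle

theorem card_bhReject (hα : 0 ≤ α0) : #(bhReject α0 pv) = bhCount α0 pv :=
  numBelow_bhCount hα

theorem mem_bhReject {k : Fin m} : k ∈ bhReject α0 pv ↔ pv k ≤ bhCount α0 pv * α0 / m := by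
  simp [bhReject]

theorem numBelow_update_zero (hα : 0 ≤ α0) {k : Fin m} {i : ℕ} (h : pv k ≤ i * α0 / m) :
    numBelow α0 (update pv k 0) i = numBelow α0 pv i := by
  refine congrArg card (filter_congr fun j _ => ?_)
  rcases eq_or_ne j k with rfl | hj
  · simp only [update_self, h, iff_true]
    positivity
  · rw [update_of_ne hj]

theorem bhCount_update_zero_eq_iff (hα : 0 ≤ α0) {k : Fin m} {r : ℕ}
    (hpk : pv k ≤ r * α0 / m) :
    bhCount α0 (update pv k 0) = r ↔ bhCount α0 pv = r := by
  rw [bhCount_eq_findGreatest, bhCount_eq_findGreatest]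
  exact Nat.findGreatest_eq_iff_of_forall_le_iff fun i hi => by
    rw [numBelow_update_zero hα (hpk.trans (by gcongr))]

theorem one_le_bhCount_update_zero (hα : 0 ≤ α0) (hm : 0 < m) (k : Fin m) :
    1 ≤ bhCount α0 (update pv k 0) := by
  refine Nat.le_findGreatest hm (card_pos.mpr ⟨k, ?_⟩)
  simp only [mem_filter, mem_univ, update_self, true_and]
  positivity

theorem ite_mem_bhReject_eq (hα : 0 ≤ α0) (k : Fin m) :
    (if k ∈ bhReject α0 pv then (max (#(bhReject α0 pv) : ℝ) 1)⁻¹ else 0) =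
      if pv k ≤ bhCount α0 (update pv k 0) * (α0 / m)
      then (bhCount α0 (update pv k 0) : ℝ)⁻¹ else 0 := by
  simp only [← mul_div_assoc]
  by_cases hk : k ∈ bhReject α0 pv
  · have hpk := mem_bhReject.mp hk
    have hR : bhCount α0 (update pv k 0) = bhCount α0 pv :=
      (bhCount_update_zero_eq_iff hα hpk).mpr rfl
    have hpos : (1 : ℝ) ≤ #(bhReject α0 pv) := Nat.one_le_cast.mpr (card_pos.mpr ⟨k, hk⟩)
    rw [if_pos hk, hR, if_pos hpk, max_eq_left hpos, card_bhReject hα]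
  · refine (if_neg hk).trans (if_neg fun hpk => hk (mem_bhReject.mpr ?_)).symm
    rwa [(bhCount_update_zero_eq_iff hα hpk).mp rfl]

theorem fdp_eq_sum (hα : 0 ≤ α0) (N₀ : Finset (Fin m)) :
    (#(bhReject α0 pv ∩ N₀) : ℝ) / max (#(bhReject α0 pv) : ℝ) 1 =
      ∑ k ∈ N₀, if pv k ≤ bhCount α0 (update pv k 0) * (α0 / m)
        then (bhCount α0 (update pv k 0) : ℝ)⁻¹ else 0 := by
  rw [← sum_congr rfl fun k _ => ite_mem_bhReject_eq hα k, sum_ite_mem, sum_const,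
    nsmul_eq_mul, inter_comm, div_eq_mul_inv]

end Combinatorics

theorem measurable_numBelow {m : ℕ} (α0 : ℝ) (i : ℕ) :
    Measurable fun pv : Fin m → ℝ => numBelow α0 pv i := by
  simp only [numBelow, card_filter]
  exact Finset.measurable_sum _ fun k _ => Measurable.ite
    (measurableSet_le (measurable_pi_apply k) measurable_const) measurable_const measurable_const

theorem measurable_bhCount {m : ℕ} (α0 : ℝ) : Measurable (bhCount α0 : (Fin m → ℝ) → ℕ) :=
  measurable_findGreatest fun i _ => measurableSet_le measurable_const (measurable_numBelow α0 i)

section Probability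

variable {Ω : Type*}

variable {X : Ω → ℝ} {Y : Ω → ℕ} {s : Finset ℕ} {c : ℝ}

theorem ite_le_mul_inv_eq_sum_indicator (hYs : ∀ ω, Y ω ∈ s) :
    (fun ω => if X ω ≤ Y ω * c then (Y ω : ℝ)⁻¹ else 0) =
      fun ω => ∑ r ∈ s, (X ⁻¹' Set.Iic (r * c) ∩ Y ⁻¹' {r}).indicator (fun _ => (r : ℝ)⁻¹) ω := by
  funext ω
  rw [sum_eq_single_of_mem (Y ω) (hYs ω) fun r _ hr => ?_]
  · by_cases hX : X ω ≤ Y ω * c <;> simp [hX]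
  · exact Set.indicator_of_notMem (fun h => hr h.2.symm) _

variable [MeasurableSpace Ω] {P : Measure Ω}

theorem ProbabilityTheory.iIndepFun.indepFun_comp_update {ι β γ : Type*} [Fintype ι]
    [DecidableEq ι] [MeasurableSpace β] [MeasurableSpace γ] {Z : ι → Ω → β}
    (hZ : ∀ i, Measurable (Z i)) (h : iIndepFun Z P) (k : ι) (b : β)
    {f : (ι → β) → γ} (hf : Measurable f) :
    IndepFun (Z k) (fun ω => f (update (fun j => Z j ω) k b)) P := by
  have hrest := h.indepFun_finset {k} {k}ᶜ (disjoint_singleton_left.mpr (by simp)) hZ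
  let extend : (({k}ᶜ : Finset ι) → β) → ι → β := fun x j =>
    if hj : j = k then b else x ⟨j, by simpa using hj⟩
  have hextend : Measurable extend := measurable_pi_lambda _ fun j => by
    by_cases hj : j = k
    · simp only [extend, hj, dite_true, measurable_const]
    · simp only [extend, hj, dite_false]
      exact measurable_pi_apply _
  convert hrest.comp (measurable_pi_apply ⟨k, mem_singleton_self k⟩) (hf.comp hextend) using 1
  · rfl
  funext ω
  refine congrArg f (funext fun j => ?_)
  by_cases hj : j = k
  · subst hj
    simp [extend]
  · simp [extend, hj]

theorem integrable_ite_le_mul_inv [IsFiniteMeasure P] (hX : Measurable X) (hY : Measurable Y)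
    (hYs : ∀ ω, Y ω ∈ s) :
    Integrable (fun ω => if X ω ≤ Y ω * c then (Y ω : ℝ)⁻¹ else 0) P := by
  rw [ite_le_mul_inv_eq_sum_indicator hYs]
  exact integrable_finsetSum _ fun r _ => (integrable_const _).indicator
    ((hX measurableSet_Iic).inter (hY (measurableSet_singleton r)))

theorem integral_ite_le_mul_inv_of_indepFun [IsProbabilityMeasure P] (hX : Measurable X)
    (hY : Measurable Y) (hXY : IndepFun X Y P) (hYs : ∀ ω, Y ω ∈ s) (hs : 0 ∉ s)
    (hunif : ∀ r ∈ s, P.real {ω | X ω ≤ r * c} = r * c) :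
    ∫ ω, (if X ω ≤ Y ω * c then (Y ω : ℝ)⁻¹ else 0) ∂P = c := by
  have hterm : ∀ r ∈ s,
      ∫ ω, (X ⁻¹' Set.Iic (r * c) ∩ Y ⁻¹' {r}).indicator (fun _ => (r : ℝ)⁻¹) ω ∂P =
        c * P.real (Y ⁻¹' {r}) := by
    intro r hr
    have hr0 : (r : ℝ) ≠ 0 := Nat.cast_ne_zero.mpr (ne_of_mem_of_not_mem hr hs)
    rw [integral_indicator_const _
      ((hX measurableSet_Iic).inter (hY (measurableSet_singleton r))),
      smul_eq_mul, measureReal_def,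
      hXY.measure_inter_preimage_eq_mul _ _ measurableSet_Iic (measurableSet_singleton r),
      ENNReal.toReal_mul, ← measureReal_def, ← measureReal_def,
      show X ⁻¹' Set.Iic (r * c) = {ω | X ω ≤ r * c} from rfl, hunif r hr]
    field_simp
  have hmass : ∑ r ∈ s, P.real (Y ⁻¹' {r}) = 1 := by
    rw [sum_measureReal_preimage_singleton s fun r _ => hY (measurableSet_singleton r),
      Set.preimage_eq_univ_iff.mpr fun _ ⟨ω, hω⟩ => hω ▸ hYs ω, probReal_univ]
  rw [ite_le_mul_inv_eq_sum_indicator hYs, integral_finsetSum _ fun r _ =>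
      (integrable_const _).indicator
        ((hX measurableSet_Iic).inter (hY (measurableSet_singleton r))),
    sum_congr rfl hterm, ← mul_sum, hmass, mul_one]

end Probability

/-- For m independent p-values of which the true nulls are uniform, the FDR of
the Benjamini–Hochberg procedure at level `α0` equals `(m₀/m)·α0`, and in
particular is at most `α0`. -/
theorem bh_fdr_exact {Ω : Type*} [MeasurableSpace Ω] (P : Measure Ω)
    [IsProbabilityMeasure P] {m : ℕ} (hm : 0 < m)
    (pv : Fin m → Ω → ℝ) (hmeas : ∀ k, Measurable (pv k))
    (hindep : ProbabilityTheory.iIndepFun pv P)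
    (N₀ : Finset (Fin m))
    (hnull : ∀ k ∈ N₀, ∀ t ∈ Set.Icc (0 : ℝ) 1, (P {ω | pv k ω ≤ t}).toReal = t)
    (α0 : ℝ) (hα0 : 0 < α0) (hα1 : α0 ≤ 1) :
    (∫ ω, ((bhReject α0 (fun k => pv k ω) ∩ N₀).card : ℝ)
        / max ((bhReject α0 (fun k => pv k ω)).card : ℝ) 1 ∂P)
      = ((N₀.card : ℝ) / m) * α0 ∧
    (∫ ω, ((bhReject α0 (fun k => pv k ω) ∩ N₀).card : ℝ)
        / max ((bhReject α0 (fun k => pv k ω)).card : ℝ) 1 ∂P) ≤ α0 := by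
  have hm' : (0 : ℝ) < m := Nat.cast_pos.mpr hm
  let R : Fin m → Ω → ℕ := fun k ω => bhCount α0 (update (fun j => pv j ω) k 0)
  have hR : ∀ k, Measurable (R k) := fun k =>
    (measurable_bhCount α0).comp (measurable_update_left.comp (measurable_pi_lambda _ hmeas))
  have hRs : ∀ k ω, R k ω ∈ Icc 1 m := fun k ω =>
    mem_Icc.mpr ⟨one_le_bhCount_update_zero hα0.le hm k, Nat.findGreatest_le m⟩
  have hunif : ∀ k ∈ N₀, ∀ r ∈ Icc 1 m, P.real {ω | pv k ω ≤ r * (α0 / m)} = r * (α0 / m) :=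
    fun k hk r hr => hnull k hk _ ⟨by positivity, by
      rw [← mul_div_assoc, div_le_one hm']
      exact (mul_le_mul (Nat.cast_le.mpr (mem_Icc.mp hr).2) hα1 hα0.le m.cast_nonneg).trans_eq
        (mul_one _)⟩
  have hfdr : (∫ ω, ((bhReject α0 (fun k => pv k ω) ∩ N₀).card : ℝ)
      / max ((bhReject α0 (fun k => pv k ω)).card : ℝ) 1 ∂P) = N₀.card * (α0 / m) := by
    simp_rw [fdp_eq_sum hα0.le]
    rw [integral_finsetSum _ fun k _ => integrable_ite_le_mul_inv (hmeas k) (hR k) (hRs k),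
      sum_congr rfl fun k hk => integral_ite_le_mul_inv_of_indepFun (hmeas k) (hR k)
        (hindep.indepFun_comp_update hmeas k 0 (measurable_bhCount α0)) (hRs k)
        (by simp) (hunif k hk), sum_const, nsmul_eq_mul]
  refine ⟨by rw [hfdr]; ring, ?_⟩
  calc _ = N₀.card * (α0 / m) := hfdr
    _ ≤ m * (α0 / m) := by
      gcongr
      exact_mod_cast (card_le_univ N₀).trans_eq (Fintype.card_fin m)
    _ = α0 := mul_div_cancel₀ α0 hm'.ne'
end

section
/- Let D_1,...,D_p be i.i.d. random variables with E(D_1^{2k}) < ∞ for some fixed k, drawn independently of a fixed query point; suppose the ratio E(D_1^{2k})/(E(D_1^2))^k → 1 (in an indexed family as dimension p → ∞ with distances being p-fold sums of i.i.d. coordinate contributions with finite variance of the normalized square). Then max_i D_i^2 / min_i D_i^2 → 1 in probability as p → ∞, i.e., nearest and farthest neighbor distances become indistinguishable in high dimensions. -/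
open MeasureTheory ProbabilityTheory Filter Topology Finset

/-!
By the strong law of large numbers, `D_{i,p}² / p → μ` almost surely for each of the finitely
many points `i`, so `D_{i,p} / √p → √μ > 0` for all `i` simultaneously. The ratio of the largest
to the smallest distance is unchanged by the common factor `1 / √p`, hence tends to
`√μ / √μ = 1` almost surely, and therefore in probability.
-/

section Ratio

variable {ι α : Type*} {s : Finset ι}

lemma Finset.sup'_div_inf'_div_const (hs : s.Nonempty) (f : ι → ℝ) {c : ℝ} (hc : 0 < c) :
    s.sup' hs (fun i => f i / c) / s.inf' hs (fun i => f i / c) = s.sup' hs f / s.inf' hs f := by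
  have hinf : s.inf' hs (fun i => f i / c) = s.inf' hs f / c :=
    (map_finset_inf' (OrderIso.divRight₀ c hc) hs f).symm
  rw [← sup'_div₀ hc.le, hinf, div_div_div_cancel_right₀ hc.ne']

lemma tendsto_sup'_div_inf'_of_tendsto_div (hs : s.Nonempty) {l : Filter α}
    {f : α → ι → ℝ} {c : α → ℝ} {L : ℝ} (hL : L ≠ 0) (hc : ∀ᶠ a in l, 0 < c a)
    (hf : ∀ i ∈ s, Tendsto (fun a => f a i / c a) l (𝓝 L)) :
    Tendsto (fun a => s.sup' hs (f a) / s.inf' hs (f a)) l (𝓝 1) := by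
  have hsup := Tendsto.finset_sup'_nhds_apply (g := fun _ => L) hs hf
  have hinf := Tendsto.finset_inf'_nhds_apply (g := fun _ => L) hs hf
  rw [sup'_const] at hsup
  rw [inf'_const] at hinf
  refine (div_self hL ▸ hsup.div hinf hL).congr' ?_
  filter_upwards [hc] with a ha
  exact s.sup'_div_inf'_div_const hs (f a) ha

end Ratio

lemma ProbabilityTheory.iIndepFun.strong_law_ae_row {Ω ι : Type*} [MeasurableSpace Ω]
    {P : Measure Ω} {X : ι → ℕ → Ω → ℝ}
    (hindep : iIndepFun (fun q : ι × ℕ => X q.1 q.2) P) (i : ι)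
    (hint : Integrable (X i 0) P) (hident : ∀ j, IdentDistrib (X i j) (X i 0) P P) :
    ∀ᵐ ω ∂P, Tendsto (fun p : ℕ => (∑ j ∈ range p, X i j ω) / p) atTop (𝓝 (∫ ω, X i 0 ω ∂P)) := by
  have hpair : Pairwise (Function.onFun (IndepFun · · P) (X i)) := fun j k hjk =>
    hindep.indepFun (i := (i, j)) (j := (i, k)) (by simpa using hjk)
  filter_upwards [strong_law_ae (X i) hint hpair hident] with ω hω
  simpa only [smul_eq_mul, inv_mul_eq_div] using hω

theorem distance_concentration_general {Ω : Type*} [MeasurableSpace Ω] (P : Measure Ω)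
    [IsProbabilityMeasure P] {n : ℕ}
    (hne : (Finset.univ : Finset (Fin n)).Nonempty)
    (W : Fin n → ℕ → Ω → ℝ) (hmeas : ∀ i j, Measurable (W i j))
    (hindep : ProbabilityTheory.iIndepFun
      (fun q : Fin n × ℕ => W q.1 q.2) P)
    (hident : ∀ i j k l, Measure.map (W i j) P = Measure.map (W k l) P)
    (μ : ℝ) (hμ : 0 < μ)
    (hmean : ∀ i j, (∫ ω, W i j ω ∂P) = μ)
    (hL2 : ∀ i j, MemLp (W i j) 2 P) :
    ∀ ε > (0 : ℝ), Tendsto (fun p : ℕ =>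
      P {ω | ε ≤ |(Finset.univ.sup' hne
            (fun i => Real.sqrt (∑ j ∈ Finset.range p, W i j ω)))
          / (Finset.univ.inf' hne
            (fun i => Real.sqrt (∑ j ∈ Finset.range p, W i j ω))) - 1|})
      atTop (nhds 0) := by
  have hslln (i : Fin n) :
      ∀ᵐ ω ∂P, Tendsto (fun p : ℕ => (∑ j ∈ range p, W i j ω) / p) atTop (𝓝 μ) :=
    hmean i 0 ▸ hindep.strong_law_ae_row i ((hL2 i 0).integrable one_le_two) fun j =>
      ⟨(hmeas i j).aemeasurable, (hmeas i 0).aemeasurable, hident i j i 0⟩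
  have hratio : ∀ᵐ ω ∂P, Tendsto (fun p : ℕ => univ.sup' hne (fun i => √(∑ j ∈ range p, W i j ω))
      / univ.inf' hne (fun i => √(∑ j ∈ range p, W i j ω))) atTop (𝓝 1) := by
    filter_upwards [ae_all_iff.2 hslln] with ω hω
    refine tendsto_sup'_div_inf'_of_tendsto_div hne (c := fun p : ℕ => √(p : ℝ))
      (Real.sqrt_pos.2 hμ).ne' ?_ fun i _ => ?_
    · filter_upwards [eventually_gt_atTop 0] with p hp
      positivity
    · simpa only [Real.sqrt_div' _ (Nat.cast_nonneg _)] using (hω i).sqrt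
  intro ε hε
  simpa only [Real.dist_eq] using tendstoInMeasure_iff_dist.1
    (tendstoInMeasure_of_tendsto_ae (fun p => (by fun_prop : Measurable _).aestronglyMeasurable)
      hratio) ε hε

/-- Concentration of distances in high dimensions (Beyer et al. 1999): with
squared distances given by p-fold sums of i.i.d. nonnegative contributions with
positive mean and finite variance, the ratio of the farthest to the nearest
distance among n points tends to 1 in probability as p → ∞. -/
theorem distance_concentration {Ω : Type*} [MeasurableSpace Ω] (P : Measure Ω)
    [IsProbabilityMeasure P] {n : ℕ}
    (hne : (Finset.univ : Finset (Fin n)).Nonempty)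
    (W : Fin n → ℕ → Ω → ℝ) (hmeas : ∀ i j, Measurable (W i j))
    (hindep : ProbabilityTheory.iIndepFun
      (fun q : Fin n × ℕ => W q.1 q.2) P)
    (hident : ∀ i j k l, Measure.map (W i j) P = Measure.map (W k l) P)
    (hnonneg : ∀ i j ω, 0 ≤ W i j ω)
    (μ σ2 : ℝ) (hμ : 0 < μ)
    (hmean : ∀ i j, (∫ ω, W i j ω ∂P) = μ)
    (hL2 : ∀ i j, MemLp (W i j) 2 P)
    (hvar : ∀ i j, (∫ ω, (W i j ω - μ) ^ 2 ∂P) = σ2) :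
    ∀ ε > (0 : ℝ), Tendsto (fun p : ℕ =>
      P {ω | ε ≤ |(Finset.univ.sup' hne
            (fun i => Real.sqrt (∑ j ∈ Finset.range p, W i j ω)))
          / (Finset.univ.inf' hne
            (fun i => Real.sqrt (∑ j ∈ Finset.range p, W i j ω))) - 1|})
      atTop (nhds 0) :=
  distance_concentration_general P hne W hmeas hindep hident μ hμ hmean hL2
end
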